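/- For every n ≥ 2, the word τ^{2n}(0) is not 2-irreducibly square-free, where τ(0)=012, τ(1)=02, τ(2)=1. -/

import Mathlib

/-- A word has a square if some nonempty `u` with `u ++ u` an infix. -/
def HasSquare (w : List (Fin 3)) : Prop :=
  ∃ u : List (Fin 3), u ≠ [] ∧ (u ++ u) <:+: w

def SquareFree (w : List (Fin 3)) : Prop := ¬ HasSquare w

/-- `u` occurs as a factor of the infinite word `x`. -/
def InfFactor (u : List (Fin 3)) (x : ℕ → Fin 3) : Prop :=
  ∃ m : ℕ, ∀ i < u.length, u.getD i 0 = x (m + i)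

def InfSquareFree (x : ℕ → Fin 3) : Prop :=
  ¬ ∃ u : List (Fin 3), u ≠ [] ∧ InfFactor (u ++ u) x

/-- A square-free word is irreducibly square-free if deleting any interior
letter creates a square. -/
def IrrSF (w : List (Fin 3)) : Prop :=
  SquareFree w ∧
    ∀ (w1 w2 : List (Fin 3)) (a : Fin 3),
      w = w1 ++ [a] ++ w2 → w1 ≠ [] → w2 ≠ [] → HasSquare (w1 ++ w2)

/-- The Thue morphism τ(0)=012, τ(1)=02, τ(2)=1. -/
def tau : Fin 3 → List (Fin 3) := ![[0,1,2], [0,2], [1]]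

def tauW (w : List (Fin 3)) : List (Fin 3) := w.flatMap tau

/-- The Thue word `t = τ^ω(0)`: the `n`-th letter of the fixed point of τ. -/
def thue (n : ℕ) : Fin 3 := ((tauW^[n+1]) [0]).getD n 0

/-- A square-free word is 2-irreducibly square-free if deleting any interior
factor of length 2 creates a square. -/
def TwoIrrSF (w : List (Fin 3)) : Prop :=
  SquareFree w ∧
    ∀ (w1 v w2 : List (Fin 3)), w = w1 ++ v ++ w2 → v.length = 2 →
      w1 ≠ [] → w2 ≠ [] → HasSquare (w1 ++ w2)

/-! Write `τ^{2n}(0) = x·0121`. Deleting the factor `12` leaves `x·01`, which is a prefix of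
`τ^{2n}(0)` and hence square-free whenever `τ^{2n}(0)` is. -/

lemma HasSquare.of_infix {u w : List (Fin 3)} (hu : HasSquare u) (huw : u <:+: w) :
    HasSquare w :=
  let ⟨s, hs, hsu⟩ := hu
  ⟨s, hs, hsu.trans huw⟩

lemma not_twoIrrSF_append (x : List (Fin 3)) (a b c : Fin 3) :
    ¬ TwoIrrSF (x ++ [a, b, c, b]) := by
  rintro ⟨hsf, hdel⟩
  have hsq : HasSquare (x ++ [a] ++ [b]) :=
    hdel (x ++ [a]) [b, c] [b] (by simp) rfl (by simp) (by simp)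
  exact hsf (hsq.of_infix (List.IsPrefix.isInfix ⟨[c, b], by simp⟩))

lemma tauW_append (u v : List (Fin 3)) : tauW (u ++ v) = tauW u ++ tauW v :=
  List.flatMap_append

lemma tauW_tauW_append_one (x : List (Fin 3)) :
    tauW (tauW (x ++ [1])) = tauW (tauW x) ++ [0, 1, 2, 1] := by
  rw [tauW_append, tauW_append]
  rfl

lemma iterate_two_mul_tauW_succ (n : ℕ) (w : List (Fin 3)) :
    tauW^[2 * (n + 1)] w = tauW (tauW (tauW^[2 * n] w)) := by
  rw [show 2 * (n + 1) = 2 * n + 1 + 1 by ring, Function.iterate_succ_apply',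
    Function.iterate_succ_apply']

lemma exists_iterate_two_mul_tauW_eq_append_one {n : ℕ} (hn : 1 ≤ n) :
    ∃ x, tauW^[2 * n] [0] = x ++ [1] := by
  induction n, hn using Nat.le_induction with
  | base => exact ⟨[0, 1, 2, 0, 2], rfl⟩
  | succ n _ ih =>
    obtain ⟨x, hx⟩ := ih
    exact ⟨tauW (tauW x) ++ [0, 1, 2], by
      rw [iterate_two_mul_tauW_succ, hx, tauW_tauW_append_one, List.append_assoc]; rfl⟩

lemma exists_iterate_two_mul_tauW_eq_append {n : ℕ} (hn : 2 ≤ n) :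
    ∃ x, tauW^[2 * n] [0] = x ++ [0, 1, 2, 1] := by
  obtain ⟨m, rfl⟩ := Nat.exists_eq_add_of_le' hn
  obtain ⟨x, hx⟩ := exists_iterate_two_mul_tauW_eq_append_one (n := m + 1) (by omega)
  exact ⟨tauW (tauW x), by rw [iterate_two_mul_tauW_succ, hx, tauW_tauW_append_one]⟩

theorem tau_even_powers_not_2irrSF (n : ℕ) (hn : 2 ≤ n) :
    ¬ TwoIrrSF ((tauW^[2 * n]) [0]) := by
  obtain ⟨x, hx⟩ := exists_iterate_two_mul_tauW_eq_append hn
  rw [hx]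
  exact not_twoIrrSF_append x 0 1 2
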